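/- arXiv:1011.1633 — 2 statements merged into one kernel-verified Lean document; each statement's English description precedes it below -/
import Mathlib

section
/- Let H be a group and let Ω(H) = ((S, 1_S, ∗), ◁, ▷, f) and Ω'(H) = ((S, 1_S, ∗'), ◁', ▷', f') be two group extending structures of H on the same pointed set (S, 1_S), with unified products H ⋉ S and H ⋉' S. Then the following are equivalent: (1) there exists a morphism of groups ψ : H ⋉ S → H ⋉' S with ψ(h, 1_S) = (h, 1_S) for all h ∈ H and π_S ∘ ψ = π_S (where π_S(h, s) = s); (2) ◁ = ◁' and there exists a unitary map r : S → H such that for all s, s₁, s₂ ∈ S and h ∈ H: s ▷ h = r(s) (s ▷' h) r(s ◁ h)⁻¹; s₁ ∗ s₂ = (s₁ ◁ r(s₂)) ∗' s₂; f(s₁, s₂) = r(s₁) (s₁ ▷' r(s₂)) f'(s₁ ◁ r(s₂), s₂) r(s₁ ∗ s₂)⁻¹. Furthermore, any such morphism ψ is an isomorphism of groups and is given by ψ(h, s) = (h r(s), s). -/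
/-! A stabilizing morphism ψ is forced to be a shear `(h, s) ↦ (h * r s, s)` with
`r s = (ψ (1, s)).1`, because `(h, s) = (h, 1_S) · (1, s)`; a shear is a bijection with inverse
the shear by `r⁻¹`. Evaluating `ψ (a · b) = ψ a ·' ψ b` at `a = (1, s), b = (h, 1_S)` and at
`a = (1, s₁), b = (1, s₂)` gives the compatibility conditions. Conversely these special cases
imply multiplicativity everywhere, since `(h₁, s₁) · (h₂, s₂) = (h₁, s₁) · (h₂, 1_S) · (1, s₂)` and
associativity in `H ⋉' S` makes `h ↦ (s ▷' h, s ◁' h)` a cocycle. -/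

universe u v

/-- An extending datum `Ω(H) = ((S, 1_S, ∗), ◁, ▷, f)` of a group `H`:
a pointed set `(S, one)`, a binary operation `mul = ∗` with unit `one`,
maps `act = ◁ : S × H → S`, `rho = ▷ : S × H → H`, `f : S × S → H`
satisfying the normalization conditions. -/
structure ExtendingDatum (H : Type u) [Group H] (S : Type v) where
  one : S
  mul : S → S → S
  act : S → H → S
  rho : S → H → H
  f : S → S → H
  mul_one' : ∀ s, mul s one = s
  one_mul' : ∀ s, mul one s = s
  act_one' : ∀ s, act s 1 = s
  one_act' : ∀ h, act one h = one
  one_rho' : ∀ h, rho one h = h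
  rho_one' : ∀ s, rho s 1 = 1
  f_one_right' : ∀ s, f s one = 1
  f_one_left' : ∀ s, f one s = 1

variable {H : Type u} [Group H] {S : Type v}

/-- The multiplication of the (prospective) unified product `H ⋉ S` on the set `H × S`:
`(h₁, s₁) · (h₂, s₂) = (h₁ (s₁ ▷ h₂) f(s₁ ◁ h₂, s₂), (s₁ ◁ h₂) ∗ s₂)`. -/
def ExtendingDatum.Mul (Ω : ExtendingDatum H S) (x y : H × S) : H × S :=
  (x.1 * Ω.rho x.2 y.1 * Ω.f (Ω.act x.2 y.1) y.2, Ω.mul (Ω.act x.2 y.1) y.2)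

/-- `Ω` is a group extending structure of `H` when the multiplication `Ω.Mul` makes
`H × S` a group with unit `(1_H, 1_S)` (a monoid in which every element has a left
inverse is a group). The resulting group is the unified product `H ⋉ S`. -/
def IsGroupExtendingStructure (Ω : ExtendingDatum H S) : Prop :=
  (∀ a b c : H × S, Ω.Mul (Ω.Mul a b) c = Ω.Mul a (Ω.Mul b c)) ∧
  (∀ a : H × S, Ω.Mul ((1 : H), Ω.one) a = a) ∧
  (∀ a : H × S, Ω.Mul a ((1 : H), Ω.one) = a) ∧
  (∀ a : H × S, ∃ b : H × S, Ω.Mul b a = ((1 : H), Ω.one))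

namespace ExtendingDatum

variable (Ω : ExtendingDatum H S)

theorem Mul_mk_one_left (h g : H) (s : S) : Ω.Mul (h, Ω.one) (g, s) = (h * g, s) := by
  simp [ExtendingDatum.Mul, Ω.one_act', Ω.one_rho', Ω.f_one_left', Ω.one_mul']

theorem Mul_mk_one_right (h g : H) (s : S) :
    Ω.Mul (h, s) (g, Ω.one) = (h * Ω.rho s g, Ω.act s g) := by
  simp [ExtendingDatum.Mul, Ω.f_one_right', Ω.mul_one']

variable {Ω}

theorem rho_mul_and_act_mul
    (hassoc : ∀ a b c : H × S, Ω.Mul (Ω.Mul a b) c = Ω.Mul a (Ω.Mul b c)) (s : S) (g h : H) :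
    Ω.rho s (g * h) = Ω.rho s g * Ω.rho (Ω.act s g) h ∧
      Ω.act s (g * h) = Ω.act (Ω.act s g) h := by
  have := hassoc (1, s) (g, Ω.one) (h, Ω.one)
  rw [Mul_mk_one_right, Mul_mk_one_right, Mul_mk_one_left, Mul_mk_one_right] at this
  simpa [Prod.ext_iff, eq_comm] using this

end ExtendingDatum

def shear (r : S → H) (x : H × S) : H × S := (x.1 * r x.2, x.2)

theorem shear_bijective (r : S → H) : Function.Bijective (shear r) :=
  Function.bijective_iff_has_inverse.2
    ⟨shear r⁻¹, fun x => by simp [shear], fun x => by simp [shear]⟩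

theorem exists_eq_shear_of_map_mul {Ω Ω' : ExtendingDatum H S} (hone : Ω'.one = Ω.one)
    {ψ : H × S → H × S} (hmul : ∀ a b : H × S, ψ (Ω.Mul a b) = Ω'.Mul (ψ a) (ψ b))
    (hH : ∀ h : H, ψ (h, Ω.one) = (h, Ω.one)) (hproj : ∀ x : H × S, (ψ x).2 = x.2) :
    ∃ r : S → H, r Ω.one = 1 ∧ ψ = shear r := by
  refine ⟨fun s => (ψ (1, s)).1, congrArg Prod.fst (hH 1), funext fun ⟨h, s⟩ => ?_⟩
  calc ψ (h, s) = Ω'.Mul (ψ (h, Ω.one)) (ψ (1, s)) := by rw [← hmul, Ω.Mul_mk_one_left, mul_one]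
    _ = Ω'.Mul (h, Ω'.one) ((ψ (1, s)).1, s) := by
        rw [hH, hone]; exact congrArg (Ω'.Mul _) (Prod.ext rfl (hproj _))
    _ = shear (fun s => (ψ (1, s)).1) (h, s) := by rw [Ω'.Mul_mk_one_left]; rfl

theorem shear_map_mul_iff {Ω Ω' : ExtendingDatum H S} (hone : Ω'.one = Ω.one)
    (hassoc' : ∀ a b c : H × S, Ω'.Mul (Ω'.Mul a b) c = Ω'.Mul a (Ω'.Mul b c))
    {r : S → H} (hr : r Ω.one = 1) :
    (∀ a b : H × S, shear r (Ω.Mul a b) = Ω'.Mul (shear r a) (shear r b)) ↔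
      Ω.act = Ω'.act ∧
        (∀ (s : S) (h : H), Ω.rho s h = r s * Ω'.rho s h * (r (Ω.act s h))⁻¹) ∧
        (∀ s₁ s₂ : S, Ω.mul s₁ s₂ = Ω'.mul (Ω.act s₁ (r s₂)) s₂) ∧
        (∀ s₁ s₂ : S,
          Ω.f s₁ s₂ = r s₁ * Ω'.rho s₁ (r s₂) * Ω'.f (Ω.act s₁ (r s₂)) s₂ * (r (Ω.mul s₁ s₂))⁻¹) := by
  constructor
  · intro hmul
    have hact_rho : ∀ (s : S) (h : H),
        Ω.rho s h * r (Ω.act s h) = r s * Ω'.rho s h ∧ Ω.act s h = Ω'.act s h := by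
      intro s h
      have := hmul (1, s) (h, Ω.one)
      rw [Ω.Mul_mk_one_right] at this
      simp only [shear, hr, mul_one, one_mul] at this
      rw [← hone, Ω'.Mul_mk_one_right] at this
      simpa [Prod.ext_iff] using this
    have hact : Ω.act = Ω'.act := funext₂ fun s h => (hact_rho s h).2
    have hf_mul : ∀ s₁ s₂ : S,
        Ω.f s₁ s₂ * r (Ω.mul s₁ s₂) = r s₁ * Ω'.rho s₁ (r s₂) * Ω'.f (Ω.act s₁ (r s₂)) s₂ ∧
          Ω.mul s₁ s₂ = Ω'.mul (Ω.act s₁ (r s₂)) s₂ := by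
      intro s₁ s₂
      have := hmul (1, s₁) (1, s₂)
      simpa [shear, ExtendingDatum.Mul, Ω.act_one', Ω.rho_one', hact, Prod.ext_iff] using this
    refine ⟨hact, fun s h => ?_, fun s₁ s₂ => (hf_mul s₁ s₂).2, fun s₁ s₂ => ?_⟩
    · rw [eq_mul_inv_iff_mul_eq, (hact_rho s h).1]
    · rw [eq_mul_inv_iff_mul_eq, (hf_mul s₁ s₂).1]
  · rintro ⟨hact, hrho, hmul, hf⟩ ⟨h₁, s₁⟩ ⟨h₂, s₂⟩
    obtain ⟨hrho', hact'⟩ := ExtendingDatum.rho_mul_and_act_mul hassoc' s₁ h₂ (r s₂)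
    simp only [shear, ExtendingDatum.Mul, Prod.ext_iff]
    rw [hrho', hact', ← hact, hrho, hf, hmul]
    exact ⟨by group, rfl⟩

theorem unified_products_stabilizing_morphism_iff_general
    (Ω Ω' : ExtendingDatum H S) (hone : Ω'.one = Ω.one)
    (hΩ' : IsGroupExtendingStructure Ω') :
    ((∃ ψ : H × S → H × S,
        (∀ a b : H × S, ψ (Ω.Mul a b) = Ω'.Mul (ψ a) (ψ b)) ∧
        (∀ h : H, ψ (h, Ω.one) = (h, Ω.one)) ∧
        (∀ x : H × S, (ψ x).2 = x.2)) ↔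
      (Ω.act = Ω'.act ∧
        ∃ r : S → H, r Ω.one = 1 ∧
          (∀ (s : S) (h : H),
            Ω.rho s h = r s * Ω'.rho s h * (r (Ω.act s h))⁻¹) ∧
          (∀ s₁ s₂ : S, Ω.mul s₁ s₂ = Ω'.mul (Ω.act s₁ (r s₂)) s₂) ∧
          (∀ s₁ s₂ : S,
            Ω.f s₁ s₂
              = r s₁ * Ω'.rho s₁ (r s₂) * Ω'.f (Ω.act s₁ (r s₂)) s₂ *
                  (r (Ω.mul s₁ s₂))⁻¹))) ∧
    (∀ ψ : H × S → H × S,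
      (∀ a b : H × S, ψ (Ω.Mul a b) = Ω'.Mul (ψ a) (ψ b)) →
      (∀ h : H, ψ (h, Ω.one) = (h, Ω.one)) →
      (∀ x : H × S, (ψ x).2 = x.2) →
      Function.Bijective ψ ∧
        ∃ r : S → H, r Ω.one = 1 ∧ ∀ (h : H) (s : S), ψ (h, s) = (h * r s, s)) := by
  refine ⟨⟨?_, ?_⟩, ?_⟩
  · rintro ⟨ψ, hmul, hH, hproj⟩
    obtain ⟨r, hr, rfl⟩ := exists_eq_shear_of_map_mul hone hmul hH hproj
    obtain ⟨hact, hrho, hmul', hf⟩ := (shear_map_mul_iff hone hΩ'.1 hr).1 hmul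
    exact ⟨hact, r, hr, hrho, hmul', hf⟩
  · rintro ⟨hact, r, hr, hcompat⟩
    exact ⟨shear r, (shear_map_mul_iff hone hΩ'.1 hr).2 ⟨hact, hcompat⟩,
      fun h => by simp [shear, hr], fun _ => rfl⟩
  · intro ψ hmul hH hproj
    obtain ⟨r, hr, rfl⟩ := exists_eq_shear_of_map_mul hone hmul hH hproj
    exact ⟨shear_bijective r, r, hr, fun _ _ => rfl⟩

/-- **(Proposition: Schreier-type classification).** Let `Ω(H)` and `Ω'(H)` be two
group extending structures of `H` on the same pointed set `(S, 1_S)`. There exists a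
morphism of groups `ψ : H ⋉ S → H ⋉' S` stabilizing `H` and compatible with the
projections on `S` if and only if `◁ = ◁'` and the operations of `Ω` are implemented
by those of `Ω'` via a unitary map `r : S → H`. Furthermore, any such morphism is an
isomorphism of groups, given by `ψ (h, s) = (h r(s), s)`. -/
theorem unified_products_stabilizing_morphism_iff
    (Ω Ω' : ExtendingDatum H S) (hone : Ω'.one = Ω.one)
    (hΩ : IsGroupExtendingStructure Ω) (hΩ' : IsGroupExtendingStructure Ω') :
    ((∃ ψ : H × S → H × S,
        (∀ a b : H × S, ψ (Ω.Mul a b) = Ω'.Mul (ψ a) (ψ b)) ∧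
        (∀ h : H, ψ (h, Ω.one) = (h, Ω.one)) ∧
        (∀ x : H × S, (ψ x).2 = x.2)) ↔
      (Ω.act = Ω'.act ∧
        ∃ r : S → H, r Ω.one = 1 ∧
          (∀ (s : S) (h : H),
            Ω.rho s h = r s * Ω'.rho s h * (r (Ω.act s h))⁻¹) ∧
          (∀ s₁ s₂ : S, Ω.mul s₁ s₂ = Ω'.mul (Ω.act s₁ (r s₂)) s₂) ∧
          (∀ s₁ s₂ : S,
            Ω.f s₁ s₂
              = r s₁ * Ω'.rho s₁ (r s₂) * Ω'.f (Ω.act s₁ (r s₂)) s₂ *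
                  (r (Ω.mul s₁ s₂))⁻¹))) ∧
    (∀ ψ : H × S → H × S,
      (∀ a b : H × S, ψ (Ω.Mul a b) = Ω'.Mul (ψ a) (ψ b)) →
      (∀ h : H, ψ (h, Ω.one) = (h, Ω.one)) →
      (∀ x : H × S, (ψ x).2 = x.2) →
      Function.Bijective ψ ∧
        ∃ r : S → H, r Ω.one = 1 ∧ ∀ (h : H) (s : S), ψ (h, s) = (h * r s, s)) :=
  unified_products_stabilizing_morphism_iff_general Ω Ω' hone hΩ'
end

section
/- Let H be a group, Ω(H) = ((S, 1_S, ∗), ◁, ▷, f) a group extending structure of H, and (H, G, ▷', f') a normalized crossed system of groups. Then the following are equivalent: (1) there exists an isomorphism of groups ψ : H ⋉ S → H #_{▷'}^{f'} G with ψ(h, 1_S) = (h, 1_G) for all h ∈ H; (2) the action ◁ of Ω(H) is trivial (s ◁ h = s for all s, h, so that (S, ∗) is a group and (H, (S, ∗), ▷, f) is a crossed system of groups), and there exist a unitary map r : S → H and an isomorphism of groups v : (S, ∗) → G such that s ▷ h = r(s) (v(s) ▷' h) r(s)⁻¹ and f(s₁, s₂) = r(s₁) (v(s₁) ▷' r(s₂))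 f'(v(s₁), v(s₂)) r(s₁ ∗ s₂)⁻¹ for all s, s₁, s₂ ∈ S and h ∈ H. -/
/-!
Since `(h, s) = (h, 1_S) · (1_H, s)` in `H ⋉ S` and `(h, 1_G) · (k, g) = (h k, g)` in the
crossed product, a multiplicative `ψ` fixing `H` is forced to be `(h, s) ↦ (h r(s), v(s))` with
`(r(s), v(s)) = ψ(1_H, s)`. Such a map is bijective exactly when `v` is, and comparing
`ψ((1, s₁) · (h, s₂))` with `ψ(1, s₁) ψ(h, s₂)` coordinatewise yields, in turn, that `v` is
multiplicative, that `◁` is trivial (by injectivity of `v`), and the formulas for `▷` and `f`;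
conversely these formulas make the map multiplicative.
-/

universe u v

variable {H : Type u} [Group H] {S : Type v}

namespace ExtendingDatum

variable (Ω : ExtendingDatum H S)

theorem mk_one_mul_one_mk (h : H) (s : S) : Ω.Mul (h, Ω.one) (1, s) = (h, s) := by
  simp [ExtendingDatum.Mul, Ω.one_act', Ω.one_rho', Ω.f_one_left', Ω.one_mul']

theorem one_mk_mul_mk_one (s : S) (h : H) :
    Ω.Mul (1, s) (h, Ω.one) = (Ω.rho s h, Ω.act s h) := by
  simp [ExtendingDatum.Mul, Ω.f_one_right', Ω.mul_one']

theorem one_mk_mul_one_mk (s₁ s₂ : S) :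
    Ω.Mul (1, s₁) (1, s₂) = (Ω.f s₁ s₂, Ω.mul s₁ s₂) := by
  simp [ExtendingDatum.Mul, Ω.rho_one', Ω.act_one']

end ExtendingDatum

def twistedMap {G : Type*} (r : S → H) (v : S → G) (p : H × S) : H × G :=
  (p.1 * r p.2, v p.2)

theorem twistedMap_bijective_iff {G : Type*} [Nonempty S] (r : S → H) (v : S → G) :
    Function.Bijective (twistedMap r v) ↔ Function.Bijective v := by
  have hshear : twistedMap r v =
      Prod.map id v ∘ Equiv.prodCongrLeft fun s => Equiv.mulRight (r s) := rfl
  rw [hshear, Function.Bijective.of_comp_iff _ (Equiv.bijective _), Prod.map_bijective]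
  exact and_iff_right Function.bijective_id

section CrossedProduct

variable {G : Type*} [Group G]

/-- The multiplication of the crossed product `H #_{▷'}^{f'} G`. -/
def crossedProductMul (rho' : G → H → H) (f' : G → G → H) (x y : H × G) : H × G :=
  (x.1 * rho' x.2 y.1 * f' x.2 y.2, x.2 * y.2)

theorem twistedMap_mk_one (r : S → H) (v : S → G) (one : S) (hr : r one = 1) (hv : v one = 1)
    (h : H) : twistedMap r v (h, one) = (h, 1) := by
  simp [twistedMap, hr, hv]

section MapMul

variable {rho' : G → H → H} {f' : G → G → H} {Ω : ExtendingDatum H S}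

theorem eq_twistedMap_of_map_mul {ψ : H × S → H × G}
    (hψ : ∀ a b, ψ (Ω.Mul a b) = crossedProductMul rho' f' (ψ a) (ψ b))
    (hψH : ∀ h : H, ψ (h, Ω.one) = (h, 1))
    (hf'1 : ∀ g : G, f' 1 g = 1) (hrho'1 : ∀ h : H, rho' 1 h = h) :
    ψ = twistedMap (fun s => (ψ (1, s)).1) (fun s => (ψ (1, s)).2) := by
  funext ⟨h, s⟩
  have key := hψ (h, Ω.one) (1, s)
  rw [Ω.mk_one_mul_one_mk, hψH] at key
  simpa [crossedProductMul, twistedMap, hf'1, hrho'1] using key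

variable {r : S → H} {v : S → G}
  (hψ : ∀ a b,
    twistedMap r v (Ω.Mul a b) = crossedProductMul rho' f' (twistedMap r v a) (twistedMap r v b))
include hψ

theorem map_mul_act_mul_of_twistedMap (s₁ s₂ : S) (h : H) :
    v (Ω.mul (Ω.act s₁ h) s₂) = v s₁ * v s₂ := by
  simpa [twistedMap, crossedProductMul, ExtendingDatum.Mul] using
    congrArg Prod.snd (hψ (1, s₁) (h, s₂))

theorem map_mul_of_twistedMap (s₁ s₂ : S) : v (Ω.mul s₁ s₂) = v s₁ * v s₂ := by
  simpa [Ω.act_one'] using map_mul_act_mul_of_twistedMap hψ s₁ s₂ 1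

theorem map_one_of_twistedMap : v Ω.one = 1 := by
  simpa [Ω.one_mul'] using map_mul_of_twistedMap hψ Ω.one Ω.one

theorem act_eq_self_of_twistedMap (hv : Function.Injective v) (s : S) (h : H) :
    Ω.act s h = s := by
  apply hv
  simpa [Ω.mul_one', map_one_of_twistedMap hψ] using
    map_mul_act_mul_of_twistedMap hψ s Ω.one h

theorem rho_eq_of_twistedMap (hv : Function.Injective v) (hr : r Ω.one = 1)
    (hf'1 : ∀ g : G, f' g 1 = 1) (s : S) (h : H) :
    Ω.rho s h = r s * rho' (v s) h * (r s)⁻¹ := by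
  have key := hψ (1, s) (h, Ω.one)
  rw [Ω.one_mk_mul_mk_one, act_eq_self_of_twistedMap hψ hv,
    twistedMap_mk_one r v Ω.one hr (map_one_of_twistedMap hψ)] at key
  rw [eq_mul_inv_iff_mul_eq]
  simpa [twistedMap, crossedProductMul, hf'1] using congrArg Prod.fst key

theorem f_eq_of_twistedMap (s₁ s₂ : S) :
    Ω.f s₁ s₂ = r s₁ * rho' (v s₁) (r s₂) * f' (v s₁) (v s₂) * (r (Ω.mul s₁ s₂))⁻¹ := by
  have key := hψ (1, s₁) (1, s₂)
  rw [Ω.one_mk_mul_one_mk] at key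
  rw [eq_mul_inv_iff_mul_eq]
  simpa [twistedMap, crossedProductMul] using congrArg Prod.fst key

end MapMul

theorem twistedMap_map_mul {rho' : G → H → H} {f' : G → G → H} {Ω : ExtendingDatum H S}
    {r : S → H} {v : S → G}
    (hrho'mul : ∀ (g : G) (h₁ h₂ : H), rho' g (h₁ * h₂) = rho' g h₁ * rho' g h₂)
    (hact : ∀ (s : S) (h : H), Ω.act s h = s)
    (hv : ∀ s₁ s₂ : S, v (Ω.mul s₁ s₂) = v s₁ * v s₂)
    (hrho : ∀ (s : S) (h : H), Ω.rho s h = r s * rho' (v s) h * (r s)⁻¹)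
    (hf : ∀ s₁ s₂ : S,
      Ω.f s₁ s₂ = r s₁ * rho' (v s₁) (r s₂) * f' (v s₁) (v s₂) * (r (Ω.mul s₁ s₂))⁻¹)
    (a b : H × S) :
    twistedMap r v (Ω.Mul a b) =
      crossedProductMul rho' f' (twistedMap r v a) (twistedMap r v b) := by
  simp only [twistedMap, crossedProductMul, ExtendingDatum.Mul, hact, hrho, hf, hrho'mul, hv,
    Prod.mk.injEq, and_true]
  group

end CrossedProduct

theorem unified_product_iso_crossed_product_iff_general
    (Ω : ExtendingDatum H S)
    {G : Type*} [Group G] (rho' : G → H → H) (f' : G → G → H)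
    (hmul : ∀ (g : G) (h₁ h₂ : H), rho' g (h₁ * h₂) = rho' g h₁ * rho' g h₂)
    (hn1 : ∀ g : G, f' g 1 = 1) (hn2 : ∀ g : G, f' 1 g = 1)
    (hn3 : ∀ h : H, rho' 1 h = h) :
    (∃ ψ : H × S → H × G,
        Function.Bijective ψ ∧
        (∀ a b : H × S,
          ψ (Ω.Mul a b)
            = ((ψ a).1 * rho' (ψ a).2 (ψ b).1 * f' (ψ a).2 (ψ b).2,
               (ψ a).2 * (ψ b).2)) ∧
        (∀ h : H, ψ (h, Ω.one) = (h, 1))) ↔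
      ((∀ (s : S) (h : H), Ω.act s h = s) ∧
        ∃ (r : S → H) (v : S → G),
          r Ω.one = 1 ∧
          Function.Bijective v ∧
          (∀ s₁ s₂ : S, v (Ω.mul s₁ s₂) = v s₁ * v s₂) ∧
          (∀ (s : S) (h : H), Ω.rho s h = r s * rho' (v s) h * (r s)⁻¹) ∧
          (∀ s₁ s₂ : S,
            Ω.f s₁ s₂
              = r s₁ * rho' (v s₁) (r s₂) * f' (v s₁) (v s₂) *
                  (r (Ω.mul s₁ s₂))⁻¹)) := by
  constructor
  · rintro ⟨ψ, hbij, hψ, hψH⟩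
    obtain ⟨r, v, rfl⟩ : ∃ r v, ψ = twistedMap r v :=
      ⟨_, _, eq_twistedMap_of_map_mul (rho' := rho') (f' := f') hψ hψH hn2 hn3⟩
    have : Nonempty S := ⟨Ω.one⟩
    have hr : r Ω.one = 1 := by simpa [twistedMap] using congrArg Prod.fst (hψH 1)
    have hv := (twistedMap_bijective_iff r v).1 hbij
    exact ⟨act_eq_self_of_twistedMap hψ hv.1, r, v, hr, hv, map_mul_of_twistedMap hψ,
      rho_eq_of_twistedMap hψ hv.1 hr hn1, f_eq_of_twistedMap hψ⟩
  · rintro ⟨hact, r, v, hr, hvbij, hv, hrho, hf⟩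
    have : Nonempty S := ⟨Ω.one⟩
    have hψ := twistedMap_map_mul (f' := f') hmul hact hv hrho hf
    exact ⟨twistedMap r v, (twistedMap_bijective_iff r v).2 hvbij, hψ,
      twistedMap_mk_one r v Ω.one hr (map_one_of_twistedMap hψ)⟩

/-- **(Corollary: when a unified product is a crossed product, stabilizing `H`).**
Let `Ω(H)` be a group extending structure of `H` and `(H, G, ▷', f')` a normalized
crossed system of groups, with crossed product `H #_{▷'}^{f'} G` (multiplication
`(h₁, g₁)(h₂, g₂) = (h₁ (g₁ ▷' h₂) f'(g₁, g₂), g₁ g₂)` on `H × G`). Then there exists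
an isomorphism of groups `ψ : H ⋉ S → H #_{▷'}^{f'} G` with `ψ (h, 1_S) = (h, 1_G)`
if and only if the action `◁` of `Ω(H)` is trivial and there exist a unitary map
`r : S → H` and an isomorphism of groups `v : (S, ∗) → G` with
`s ▷ h = r(s) (v(s) ▷' h) r(s)⁻¹` and
`f(s₁, s₂) = r(s₁) (v(s₁) ▷' r(s₂)) f'(v(s₁), v(s₂)) r(s₁ ∗ s₂)⁻¹`. -/
theorem unified_product_iso_crossed_product_iff
    (Ω : ExtendingDatum H S) (hΩ : IsGroupExtendingStructure Ω)
    {G : Type*} [Group G] (rho' : G → H → H) (f' : G → G → H)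
    (haut : ∀ g : G, Function.Bijective (rho' g))
    (hmul : ∀ (g : G) (h₁ h₂ : H), rho' g (h₁ * h₂) = rho' g h₁ * rho' g h₂)
    (hWA : ∀ (g₁ g₂ : G) (h : H),
      rho' g₁ (rho' g₂ h) = f' g₁ g₂ * rho' (g₁ * g₂) h * (f' g₁ g₂)⁻¹)
    (hCC : ∀ g₁ g₂ g₃ : G,
      f' g₁ g₂ * f' (g₁ * g₂) g₃ = rho' g₁ (f' g₂ g₃) * f' g₁ (g₂ * g₃))
    (hn1 : ∀ g : G, f' g 1 = 1) (hn2 : ∀ g : G, f' 1 g = 1)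
    (hn3 : ∀ h : H, rho' 1 h = h) (hn4 : ∀ g : G, rho' g 1 = 1) :
    (∃ ψ : H × S → H × G,
        Function.Bijective ψ ∧
        (∀ a b : H × S,
          ψ (Ω.Mul a b)
            = ((ψ a).1 * rho' (ψ a).2 (ψ b).1 * f' (ψ a).2 (ψ b).2,
               (ψ a).2 * (ψ b).2)) ∧
        (∀ h : H, ψ (h, Ω.one) = (h, 1))) ↔
      ((∀ (s : S) (h : H), Ω.act s h = s) ∧
        ∃ (r : S → H) (v : S → G),
          r Ω.one = 1 ∧
          Function.Bijective v ∧
          (∀ s₁ s₂ : S, v (Ω.mul s₁ s₂) = v s₁ * v s₂) ∧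
          (∀ (s : S) (h : H), Ω.rho s h = r s * rho' (v s) h * (r s)⁻¹) ∧
          (∀ s₁ s₂ : S,
            Ω.f s₁ s₂
              = r s₁ * rho' (v s₁) (r s₂) * f' (v s₁) (v s₂) *
                  (r (Ω.mul s₁ s₂))⁻¹)) :=
  unified_product_iso_crossed_product_iff_general Ω rho' f' hmul hn1 hn2 hn3
end
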